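/- If Ω is an open strictly convex domain in RP^n, then every geodesic of the Hilbert metric d_Ω is a segment of a projective line. -/

import Mathlib

/-- The Hilbert distance between `x` and `y` in a bounded open convex domain
`Ω ⊂ ℝ^n` (viewed as an affine chart of `RP^n`) equals `d`: either `x = y` and `d = 0`,
or `x, y` lie on an open chord with endpoints `p, q ∈ Fr Ω`, with parameters
`s, t ∈ (0,1)`, and `d = (1/2)|log((s/(1-s))·((1-t)/t))|` (the cross-ratio formula). -/
def HilbertDistEq {n : ℕ} (Ω : Set (EuclideanSpace ℝ (Fin n)))
    (x y : EuclideanSpace ℝ (Fin n)) (d : ℝ) : Prop :=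
  (x = y ∧ d = 0) ∨
  ∃ p q : EuclideanSpace ℝ (Fin n), p ∈ frontier Ω ∧ q ∈ frontier Ω ∧
    ∃ s t : ℝ, s ∈ Set.Ioo (0:ℝ) 1 ∧ t ∈ Set.Ioo (0:ℝ) 1 ∧
      x = p + s • (q - p) ∧ y = p + t • (q - p) ∧
      d = |Real.log ((s / (1 - s)) * ((1 - t) / t))| / 2

/-!
Let `p, q` be the endpoints of the chord through `x` and `z`, and take supporting hyperplanes
`{g = g p}` and `{f = f q}` of `Ω` there. Since `f q - f` is affine along any chord of `Ω` and
nonnegative at its endpoints, replacing `Fr Ω` by these two hyperplanes can only decrease the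
cross-ratio (Funk's inequality): twice the Hilbert distance dominates the log-cross-ratio `L` with
respect to the hyperplanes, with equality exactly when the chord ends on them, as `[p, q]` does.
Since `L` is additive along `x, y, z`, the equality `d(x,y) + d(y,z) = d(x,z)` forces equality
for the chords through `x, y` and through `y, z`; by strict convexity their endpoints are then
`p` and `q`, so `x, y, z` lie in this order on `[p, q]`.
-/

open Real

section FunkChord

variable {E F : Type*} [AddCommGroup E] [Module ℝ E] [FunLike F E ℝ] [LinearMapClass F ℝ E ℝ]
  (f : F) {c s t : ℝ} {p q x y : E}

theorem chord_sub_map_identity (hx : x = p + s • (q - p)) (hy : y = p + t • (q - p)) :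
    (c - f y) * (1 - s) - (c - f x) * (1 - t) = (t - s) * (c - f q) := by
  subst hx hy
  simp only [map_add, map_smul, map_sub, smul_eq_mul]
  ring

theorem log_sub_log_le_of_chord (hst : s < t) (ht : t < 1)
    (hx : x = p + s • (q - p)) (hy : y = p + t • (q - p))
    (hfx : f x < c) (hfy : f y < c) (hfq : f q ≤ c) :
    log (c - f x) - log (c - f y) ≤ log (1 - s) - log (1 - t) := by
  have key := chord_sub_map_identity f (c := c) hx hy
  have hx' : 0 < c - f x := sub_pos.2 hfx
  have hy' : 0 < c - f y := sub_pos.2 hfy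
  have ht' : 0 < 1 - t := sub_pos.2 ht
  have hs' : 0 < 1 - s := by linarith
  rw [← log_div hx'.ne' hy'.ne', ← log_div hs'.ne' ht'.ne',
    log_le_log_iff (div_pos hx' hy') (div_pos hs' ht'), div_le_div_iff₀ hy' ht']
  nlinarith [mul_nonneg (sub_nonneg.2 hst.le) (sub_nonneg.2 hfq)]

theorem log_sub_log_eq_of_chord_iff (hst : s < t) (ht : t < 1)
    (hx : x = p + s • (q - p)) (hy : y = p + t • (q - p)) (hfx : f x < c) (hfy : f y < c) :
    log (c - f x) - log (c - f y) = log (1 - s) - log (1 - t) ↔ f q = c := by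
  have key := chord_sub_map_identity f (c := c) hx hy
  have hx' : 0 < c - f x := sub_pos.2 hfx
  have hy' : 0 < c - f y := sub_pos.2 hfy
  have ht' : 0 < 1 - t := sub_pos.2 ht
  have hs' : 0 < 1 - s := by linarith
  rw [← log_div hx'.ne' hy'.ne', ← log_div hs'.ne' ht'.ne',
    log_injOn_pos.eq_iff (div_pos hx' hy') (div_pos hs' ht'),
    div_eq_div_iff hy'.ne' ht'.ne']
  constructor
  · intro h
    have hq := (mul_eq_zero.1 (by linarith : (t - s) * (c - f q) = 0)).resolve_left
      (sub_ne_zero.2 hst.ne')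
    linarith
  · intro h
    rw [h, sub_self, mul_zero] at key
    linarith

theorem chord_reverse (p q : E) (s : ℝ) : p + s • (q - p) = q + (1 - s) • (p - q) := by
  module

theorem log_sub_log_le_of_chord_left (hs : 0 < s) (hst : s < t)
    (hx : x = p + s • (q - p)) (hy : y = p + t • (q - p))
    (hfx : f x < c) (hfy : f y < c) (hfp : f p ≤ c) :
    log (c - f y) - log (c - f x) ≤ log t - log s := by
  simpa only [sub_sub_cancel] using log_sub_log_le_of_chord f (by linarith) (by linarith)
    (hy.trans (chord_reverse p q t)) (hx.trans (chord_reverse p q s)) hfy hfx hfp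

theorem log_sub_log_eq_of_chord_left_iff (hs : 0 < s) (hst : s < t)
    (hx : x = p + s • (q - p)) (hy : y = p + t • (q - p)) (hfx : f x < c) (hfy : f y < c) :
    log (c - f y) - log (c - f x) = log t - log s ↔ f p = c := by
  simpa only [sub_sub_cancel] using log_sub_log_eq_of_chord_iff f (by linarith) (by linarith)
    (hy.trans (chord_reverse p q t)) (hx.trans (chord_reverse p q s)) hfy hfx

end FunkChord

/-- On the line through `x` and `y`, the functions `c - f` and `e - g` are affine and vanish where
the line meets the hyperplanes `{f = c}` and `{g = e}`; so this is the logarithm of the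
cross-ratio of `x`, `y` and these two points. -/
noncomputable def logCrossRatio {E : Type*} (f : E → ℝ) (c : ℝ) (g : E → ℝ) (e : ℝ) (x y : E) :
    ℝ :=
  log (c - f x) - log (c - f y) + (log (e - g y) - log (e - g x))

theorem logCrossRatio_add {E : Type*} (f : E → ℝ) (c : ℝ) (g : E → ℝ) (e : ℝ) (x y z : E) :
    logCrossRatio f c g e x y + logCrossRatio f c g e y z = logCrossRatio f c g e x z := by
  unfold logCrossRatio
  ring

theorem le_of_mem_frontier_of_forall_lt {X : Type*} [TopologicalSpace X] {Ω : Set X}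
    {f : X → ℝ} (hf : Continuous f) {c : ℝ} (hlt : ∀ w ∈ Ω, f w < c) {q : X}
    (hq : q ∈ frontier Ω) : f q ≤ c :=
  le_on_closure (fun w hw => (hlt w hw).le) hf.continuousOn continuousOn_const
    (frontier_subset_closure hq)

section OpenConvex

variable {E : Type*} [TopologicalSpace E] [AddCommGroup E] [Module ℝ E] {Ω : Set E}

def IsOrientedChord (Ω : Set E) (p q : E) (s t : ℝ) (x y : E) : Prop :=
  p ∈ frontier Ω ∧ q ∈ frontier Ω ∧ 0 < s ∧ s < t ∧ t < 1 ∧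
    x = p + s • (q - p) ∧ y = p + t • (q - p)

variable {f g : E →L[ℝ] ℝ} {a b p q x y z : E} {s t : ℝ}

theorem IsOrientedChord.mem_segment {s' t' : ℝ}
    (h₁ : IsOrientedChord Ω p q s t x y) (h₂ : IsOrientedChord Ω p q s' t' y z) :
    y ∈ segment ℝ x z := by
  obtain ⟨-, -, -, hst, -, hx, hy⟩ := h₁
  obtain ⟨-, -, -, hst', -, hy', hz⟩ := h₂
  have hyx : y - x = (t - s) • (q - p) := by rw [hx, hy]; module
  have hzy : z - y = (t' - s') • (q - p) := by rw [hy', hz]; module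
  rw [mem_segment_iff_sameRay, hyx, hzy]
  exact sameRay_smul_smul_of_mul_nonneg (by nlinarith)

theorem IsOrientedChord.logCrossRatio_le (h : IsOrientedChord Ω p q s t x y)
    (hx : x ∈ Ω) (hy : y ∈ Ω) (hf : ∀ w ∈ Ω, f w < f b) (hg : ∀ w ∈ Ω, g w < g a) :
    logCrossRatio f (f b) g (g a) x y ≤ log (1 - s) - log (1 - t) + (log t - log s) := by
  obtain ⟨hp, hq, hs, hst, ht, hxp, hyp⟩ := h
  have := log_sub_log_le_of_chord f hst ht hxp hyp (hf x hx) (hf y hy)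
    (le_of_mem_frontier_of_forall_lt f.continuous hf hq)
  have := log_sub_log_le_of_chord_left g hs hst hxp hyp (hg x hx) (hg y hy)
    (le_of_mem_frontier_of_forall_lt g.continuous hg hp)
  unfold logCrossRatio
  linarith

variable [IsTopologicalAddGroup E] [ContinuousSMul ℝ E]

theorem exists_forall_lt_of_mem_frontier (hΩo : IsOpen Ω) (hconv : Convex ℝ Ω)
    (hq : q ∈ frontier Ω) : ∃ f : E →L[ℝ] ℝ, ∀ w ∈ Ω, f w < f q :=
  geometric_hahn_banach_open_point hconv hΩo
    ((disjoint_frontier_iff_isOpen.2 hΩo).notMem_of_mem_left hq)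

theorem eq_of_mem_frontier_of_forall_lt (hΩo : IsOpen Ω) (hconv : Convex ℝ Ω)
    (hstrict : ∀ p ∈ frontier Ω, ∀ q ∈ frontier Ω, p ≠ q → ¬ segment ℝ p q ⊆ frontier Ω)
    {F : Type*} [FunLike F E ℝ] [LinearMapClass F ℝ E ℝ] {f : F} {c : ℝ}
    (hf : ∀ w ∈ Ω, f w < c) (ha : a ∈ frontier Ω) (hb : b ∈ frontier Ω)
    (hfa : f a = c) (hfb : f b = c) : a = b := by
  by_contra hab
  refine hstrict a ha b hb hab ?_
  rintro _ ⟨u, v, hu, hv, huv, rfl⟩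
  have hfw : f (u • a + v • b) = c := by
    rw [map_add, map_smul, map_smul, hfa, hfb, smul_eq_mul, smul_eq_mul, ← add_mul, huv, one_mul]
  rw [hΩo.frontier_eq]
  exact ⟨hconv.closure (frontier_subset_closure ha) (frontier_subset_closure hb) hu hv huv,
    fun hw => (hf _ hw).ne hfw⟩

theorem IsOrientedChord.logCrossRatio_eq_iff (hΩo : IsOpen Ω) (hconv : Convex ℝ Ω)
    (hstrict : ∀ p ∈ frontier Ω, ∀ q ∈ frontier Ω, p ≠ q → ¬ segment ℝ p q ⊆ frontier Ω)
    (h : IsOrientedChord Ω p q s t x y) (hx : x ∈ Ω) (hy : y ∈ Ω)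
    (ha : a ∈ frontier Ω) (hb : b ∈ frontier Ω) (hf : ∀ w ∈ Ω, f w < f b)
    (hg : ∀ w ∈ Ω, g w < g a) :
    logCrossRatio f (f b) g (g a) x y = log (1 - s) - log (1 - t) + (log t - log s) ↔
      p = a ∧ q = b := by
  obtain ⟨hp, hq, hs, hst, ht, hxp, hyp⟩ := h
  have hf_le := log_sub_log_le_of_chord f hst ht hxp hyp (hf x hx) (hf y hy)
    (le_of_mem_frontier_of_forall_lt f.continuous hf hq)
  have hg_le := log_sub_log_le_of_chord_left g hs hst hxp hyp (hg x hx) (hg y hy)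
    (le_of_mem_frontier_of_forall_lt g.continuous hg hp)
  have hf_eq := log_sub_log_eq_of_chord_iff f hst ht hxp hyp (hf x hx) (hf y hy)
  have hg_eq := log_sub_log_eq_of_chord_left_iff g hs hst hxp hyp (hg x hx) (hg y hy)
  unfold logCrossRatio
  constructor
  · intro h
    exact ⟨eq_of_mem_frontier_of_forall_lt hΩo hconv hstrict hg hp ha (hg_eq.1 (by linarith)) rfl,
      eq_of_mem_frontier_of_forall_lt hΩo hconv hstrict hf hq hb (hf_eq.1 (by linarith)) rfl⟩
  · rintro ⟨rfl, rfl⟩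
    linarith [hf_eq.2 rfl, hg_eq.2 rfl]

end OpenConvex

namespace HilbertDistEq

variable {n : ℕ} {Ω : Set (EuclideanSpace ℝ (Fin n))} {x y : EuclideanSpace ℝ (Fin n)} {d : ℝ}

theorem exists_isOrientedChord (h : HilbertDistEq Ω x y d) (hxy : x ≠ y) :
    ∃ p q s t, IsOrientedChord Ω p q s t x y ∧
      2 * d = log (1 - s) - log (1 - t) + (log t - log s) := by
  rcases h with ⟨rfl, -⟩ | ⟨p, q, hp, hq, s, t, ⟨hs, hs1⟩, ⟨ht, ht1⟩, hx, hy, hd⟩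
  · exact absurd rfl hxy
  have hs1' : 0 < 1 - s := sub_pos.2 hs1
  have ht1' : 0 < 1 - t := sub_pos.2 ht1
  have hlog : log (s / (1 - s) * ((1 - t) / t)) =
      log s - log t + (log (1 - t) - log (1 - s)) := by
    rw [log_mul (div_pos hs hs1').ne' (div_pos ht1' ht).ne', log_div hs.ne' hs1'.ne',
      log_div ht1'.ne' ht.ne']
    ring
  rcases lt_or_gt_of_ne (show s ≠ t by rintro rfl; exact hxy (hx.trans hy.symm)) with hst | hts
  · have := log_lt_log hs hst
    have := log_lt_log ht1' (by linarith : 1 - t < 1 - s)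
    refine ⟨p, q, s, t, ⟨hp, hq, hs, hst, ht1, hx, hy⟩, ?_⟩
    rw [hd, hlog, abs_of_neg (by linarith)]
    ring
  · have := log_lt_log ht hts
    have := log_lt_log hs1' (by linarith : 1 - s < 1 - t)
    refine ⟨q, p, 1 - s, 1 - t, ⟨hq, hp, hs1', by linarith, by linarith,
      hx.trans (chord_reverse p q s), hy.trans (chord_reverse p q t)⟩, ?_⟩
    rw [sub_sub_cancel, sub_sub_cancel, hd, hlog, abs_of_pos (by linarith)]
    ring

theorem pos_of_ne (h : HilbertDistEq Ω x y d) (hxy : x ≠ y) : 0 < d := by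
  obtain ⟨p, q, s, t, ⟨-, -, hs, hst, ht, -, -⟩, hd⟩ := h.exists_isOrientedChord hxy
  have := log_lt_log hs hst
  have := log_lt_log (sub_pos.2 ht) (by linarith : 1 - t < 1 - s)
  linarith

theorem eq_zero_of_self (hΩo : IsOpen Ω) (hx : x ∈ Ω) (h : HilbertDistEq Ω x x d) : d = 0 := by
  rcases h with ⟨-, rfl⟩ | ⟨p, q, hp, -, s, t, ⟨hs, hs1⟩, -, hxs, hxt, rfl⟩
  · rfl
  have hqp : q - p ≠ 0 := by
    intro hqp
    rw [hqp, smul_zero, add_zero] at hxs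
    exact (disjoint_frontier_iff_isOpen.2 hΩo).notMem_of_mem_left hp (hxs ▸ hx)
  obtain rfl : s = t := smul_left_injective ℝ hqp (add_left_cancel (hxs.symm.trans hxt))
  have hone : s / (1 - s) * ((1 - s) / s) = 1 := by
    field_simp [(sub_pos.2 hs1).ne']
  rw [hone, log_one, abs_zero, zero_div]

end HilbertDistEq

theorem hilbert_geodesics_are_lines_general (n : ℕ) (Ω : Set (EuclideanSpace ℝ (Fin n)))
    (hΩo : IsOpen Ω) (hconv : Convex ℝ Ω)
    (hstrict : ∀ p ∈ frontier Ω, ∀ q ∈ frontier Ω, p ≠ q →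
      ¬ segment ℝ p q ⊆ frontier Ω)
    (x y z : EuclideanSpace ℝ (Fin n)) (hx : x ∈ Ω) (hy : y ∈ Ω) (hz : z ∈ Ω)
    (d₁ d₂ d₃ : ℝ)
    (h1 : HilbertDistEq Ω x y d₁) (h2 : HilbertDistEq Ω y z d₂)
    (h3 : HilbertDistEq Ω x z d₃) (hsum : d₁ + d₂ = d₃) :
    y ∈ segment ℝ x z := by
  rcases eq_or_ne x y with rfl | hxy
  · exact left_mem_segment ℝ x z
  rcases eq_or_ne y z with rfl | hyz
  · exact right_mem_segment ℝ x y
  rcases eq_or_ne x z with rfl | hxz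
  · linarith [h1.pos_of_ne hxy, h2.pos_of_ne hyz, h3.eq_zero_of_self hΩo hx]
  obtain ⟨p₁, q₁, s₁, t₁, C₁, hd₁⟩ := h1.exists_isOrientedChord hxy
  obtain ⟨p₂, q₂, s₂, t₂, C₂, hd₂⟩ := h2.exists_isOrientedChord hyz
  obtain ⟨p, q, s₃, t₃, C₃, hd₃⟩ := h3.exists_isOrientedChord hxz
  have hp : p ∈ frontier Ω := C₃.1
  have hq : q ∈ frontier Ω := C₃.2.1
  obtain ⟨f, hf⟩ := exists_forall_lt_of_mem_frontier hΩo hconv hq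
  obtain ⟨g, hg⟩ := exists_forall_lt_of_mem_frontier hΩo hconv hp
  have eq₃ := (C₃.logCrossRatio_eq_iff hΩo hconv hstrict hx hz hp hq hf hg).2 ⟨rfl, rfl⟩
  have le₁ := C₁.logCrossRatio_le hx hy hf hg
  have le₂ := C₂.logCrossRatio_le hy hz hf hg
  have hadd := logCrossRatio_add f (f q) g (g p) x y z
  obtain ⟨rfl, rfl⟩ :=
    (C₁.logCrossRatio_eq_iff hΩo hconv hstrict hx hy hp hq hf hg).1 (by linarith)
  obtain ⟨rfl, rfl⟩ :=
    (C₂.logCrossRatio_eq_iff hΩo hconv hstrict hy hz hp hq hf hg).1 (by linarith)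
  exact C₁.mem_segment C₂

/-- **Geodesics of the Hilbert metric are line segments.** If `Ω` is an open, bounded
(properly convex) and strictly convex domain (its frontier contains no segment), and
`y` lies on a Hilbert geodesic from `x` to `z` — equivalently, the triangle inequality
`d_Ω(x,y) + d_Ω(y,z) = d_Ω(x,z)` is an equality — then `y` lies on the straight line
segment from `x` to `z`.  (This is the standard equivalent formulation of: every
geodesic of `d_Ω`, i.e. every curve whose length is the distance between its endpoints,
is a segment of a projective line.) -/
theorem hilbert_geodesics_are_lines (n : ℕ) (Ω : Set (EuclideanSpace ℝ (Fin n)))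
    (hΩo : IsOpen Ω) (hΩb : Bornology.IsBounded Ω) (hconv : Convex ℝ Ω)
    (hne : Ω.Nonempty)
    (hstrict : ∀ p ∈ frontier Ω, ∀ q ∈ frontier Ω, p ≠ q →
      ¬ segment ℝ p q ⊆ frontier Ω)
    (x y z : EuclideanSpace ℝ (Fin n)) (hx : x ∈ Ω) (hy : y ∈ Ω) (hz : z ∈ Ω)
    (d₁ d₂ d₃ : ℝ)
    (h1 : HilbertDistEq Ω x y d₁) (h2 : HilbertDistEq Ω y z d₂)
    (h3 : HilbertDistEq Ω x z d₃) (hsum : d₁ + d₂ = d₃) :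
    y ∈ segment ℝ x z :=
  hilbert_geodesics_are_lines_general n Ω hΩo hconv hstrict x y z hx hy hz d₁ d₂ d₃ h1 h2 h3 hsum
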